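/- Let T be a densely defined self-adjoint operator on a complex Hilbert space H with bounded transform S = T(I + T²)^{-1/2}, and let A ⊆ B(H) be a von Neumann algebra. Then T is affiliated with A if and only if S ∈ A. -/

import Mathlib

noncomputable section

variable {H : Type*} [NormedAddCommGroup H] [InnerProductSpace ℂ H] [CompleteSpace H]

/-- `S = T(I + T²)^{-1/2}`, the *bounded transform* of the (possibly unbounded) operator `T`.
This is witnessed by `C = (I + T²)⁻¹` (a positive bounded operator mapping into the domain of
`T²` with `(I + T²) ∘ C = I`, which determines `C` uniquely when `T` is self-adjoint) together
with its (unique) positive square root `R = (I + T²)^{-1/2}`, and `S = T ∘ R`. -/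
def IsBoundedTransform (T : H →ₗ.[ℂ] H) (S : H →L[ℂ] H) : Prop :=
  ∃ C R : H →L[ℂ] H, C.IsPositive ∧ R.IsPositive ∧ R * R = C ∧
    (∀ x : H, ∃ (h1 : C x ∈ T.domain) (h2 : (T ⟨C x, h1⟩ : H) ∈ T.domain),
        C x + T ⟨(T ⟨C x, h1⟩ : H), h2⟩ = x) ∧
    (∀ x : H, ∃ hx : R x ∈ T.domain, S x = T ⟨R x, hx⟩)

/-- `S` is a pure contraction: `‖Sx‖ < ‖x‖` for all `x ≠ 0`. -/
def PureContraction (S : H →L[ℂ] H) : Prop := ∀ x : H, x ≠ 0 → ‖S x‖ < ‖x‖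

/-- `T = S(I - S²)^{-1/2}`: witnessed by the (unique) positive square root `R` of `I - S²`,
with `D(T) = ran R` and `T ∘ R = S`. -/
def IsInverseBoundedTransform (S : H →L[ℂ] H) (T : H →ₗ.[ℂ] H) : Prop :=
  ∃ R : H →L[ℂ] H, R.IsPositive ∧ R * R = 1 - S * S ∧
    (T.domain : Set H) = Set.range R ∧
    (∀ x : H, ∃ hx : R x ∈ T.domain, (T ⟨R x, hx⟩ : H) = S x)

/-- The resolvent set of an unbounded operator: `z` such that `T - z` has a (bounded,
everywhere defined) two-sided inverse. -/
def pmapResolventSet (T : H →ₗ.[ℂ] H) : Set ℂ :=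
  {z | ∃ B : H →L[ℂ] H,
    (∀ x : H, ∃ h : B x ∈ T.domain, (T ⟨B x, h⟩ : H) - z • B x = x) ∧
    (∀ ψ : T.domain, B ((T ψ : H) - z • (ψ : H)) = ψ)}

/-- The spectrum of an unbounded operator. -/
def pmapSpectrum (T : H →ₗ.[ℂ] H) : Set ℂ := (pmapResolventSet T)ᶜ

/-- The real points of the spectrum of `T` (all of them, if `T` is self-adjoint). -/
def realSpec (T : H →ₗ.[ℂ] H) : Set ℝ := {x : ℝ | (x : ℂ) ∈ pmapSpectrum T}

/-- `g(S)` for a function `g : ℝ → ℂ`, via the continuous functional calculus of `S`. -/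
def boundedCalc (S : H →L[ℂ] H) (g : ℝ → ℂ) : H →L[ℂ] H :=
  cfc (fun z : ℂ => g z.re) S

/-- The homeomorphism `u : (-1,1) → ℝ`, `u(x) = x(1 - x²)^{-1/2}`. -/
def uFun : ℝ → ℝ := fun x => x / Real.sqrt (1 - x ^ 2)

/-- `h ∘ u`, extended by `0` outside `(-1,1)`. -/
def compU (h : ℝ → ℂ) : ℝ → ℂ :=
  fun x => if x ∈ Set.Ioo (-1 : ℝ) 1 then h (uFun x) else 0

/-- `h(T) := (h ∘ u)(S)`, for a function `h` on `σ(T)`, where `S` is the bounded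
transform of `T`. -/
def pmapCalc (S : H →L[ℂ] H) (h : ℝ → ℂ) : H →L[ℂ] H := boundedCalc S (compU h)

/-- `σ̃(S) = σ(S) ∩ (-1,1)`. -/
def tildeSpec (S : H →L[ℂ] H) : Set ℝ := spectrum ℝ S ∩ Set.Ioo (-1) 1

/-- `g ∈ C_c(Ω)`: continuous on `Ω`, vanishing outside a compact subset of `Ω`
(functions on `Ω` are encoded as functions on `ℝ` vanishing identically outside `Ω`). -/
def MemCc (g : ℝ → ℂ) (Ω : Set ℝ) : Prop :=
  ContinuousOn g Ω ∧ ∃ K : Set ℝ, IsCompact K ∧ K ⊆ Ω ∧ ∀ x ∉ K, g x = 0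

/-- `g ∈ C₀(Ω)`: continuous on `Ω` and vanishing at infinity on `Ω`. -/
def MemC0 (g : ℝ → ℂ) (Ω : Set ℝ) : Prop :=
  ContinuousOn g Ω ∧ (∀ x ∉ Ω, g x = 0) ∧
    ∀ ε > 0, ∃ K : Set ℝ, IsCompact K ∧ K ⊆ Ω ∧ ∀ x ∈ Ω \ K, ‖g x‖ < ε

/-- `g ∈ C_b(Ω)`: continuous and bounded on `Ω`. -/
def MemCb (g : ℝ → ℂ) (Ω : Set ℝ) : Prop :=
  ContinuousOn g Ω ∧ ∃ M : ℝ, ∀ x ∈ Ω, ‖g x‖ ≤ M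

/-- The supremum norm `‖f‖_∞` of `f` over `Ω`. -/
def supNorm (f : ℝ → ℂ) (Ω : Set ℝ) : ℝ := sSup ((fun x => ‖f x‖) '' Ω)

/-- The subspace `C*_c(S)H`: the linear span of all `g(S)ψ` with `g ∈ C_c(σ̃(S))`. -/
def ccSpan (S : H →L[ℂ] H) : Submodule ℂ H :=
  Submodule.span ℂ
    {v : H | ∃ g : ℝ → ℂ, MemCc g (tildeSpec S) ∧ ∃ ψ : H, v = boundedCalc S g ψ}

/-- The subspace `C*₀(S)H`: the linear span of all `g(S)ψ` with `g ∈ C₀(σ̃(S))`. -/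
def c0Span (S : H →L[ℂ] H) : Submodule ℂ H :=
  Submodule.span ℂ
    {v : H | ∃ g : ℝ → ℂ, MemC0 g (tildeSpec S) ∧ ∃ ψ : H, v = boundedCalc S g ψ}

/-- `TR ⊂ RT`: the bounded operator `R` commutes with the unbounded operator `T`. -/
def CommutesPMap (T : H →ₗ.[ℂ] H) (R : H →L[ℂ] H) : Prop :=
  ∀ ψ : T.domain, ∃ h : R (ψ : H) ∈ T.domain, (T ⟨R (ψ : H), h⟩ : H) = R (T ψ)

/-- `A = f₀(T)`: the operator with domain `C*_c(S)H` determined by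
`f₀(T) h(T)ψ = (fh)(T)ψ` for `h ∈ C_c(σ(T))` (where `σT` is the spectrum of `T`,
and `h(T) = (h∘u)(S)`). -/
def IsF0 (S : H →L[ℂ] H) (σT : Set ℝ) (f : ℝ → ℂ) (A : H →ₗ.[ℂ] H) : Prop :=
  A.domain = ccSpan S ∧
  ∀ h : ℝ → ℂ, MemCc h σT → ∀ ψ : H,
    ∃ hm : pmapCalc S h ψ ∈ A.domain,
      A ⟨pmapCalc S h ψ, hm⟩ = pmapCalc S (fun x => f x * h x) ψ

/-! Everything is read off the graph of `T`. Write `S = T R` with `R ≥ 0` and `R² = (1 + T²)⁻¹`.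
Symmetry of `T` makes `1 + T²` injective on `D(T²)`, so a bounded operator preserving the graph
of `T` commutes with `R²`, hence with its positive square root `R`, hence with `S`. Applied to
`R²` itself this gives `R S = S R` and `R² + S² = 1`, and then the graph of `T` is exactly
`{(R φ, S φ)}`. So an operator commuting with `S` commutes with `R² = 1 - S²`, hence with `R`,
and therefore preserves the graph of `T`. The bicommutant theorem `A'' = A` finishes the proof. -/

theorem Commute.of_mul_self_left {A : Type*} [CStarAlgebra A] [PartialOrder A]
    [StarOrderedRing A] {b c : A} (hb : 0 ≤ b) (h : Commute (b * b) c) : Commute b c := by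
  rw [← CFC.sqrt_mul_self b hb, CFC.sqrt_eq_cfc]
  exact h.cfc_nnreal _

section FormalAdjoint

variable {𝕜 E : Type*} [RCLike 𝕜] [NormedAddCommGroup E] [InnerProductSpace 𝕜 E]
  {T : E →ₗ.[𝕜] E}

theorem LinearPMap.IsFormalAdjoint.inner_eq_of_mem_graph (hT : T.IsFormalAdjoint T)
    {x y x' y' : E} (h : (x, y) ∈ T.graph) (h' : (x', y') ∈ T.graph) :
    inner 𝕜 y x' = inner 𝕜 x y' := by
  obtain ⟨u, rfl, rfl⟩ := (T.mem_graph_iff).mp h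
  obtain ⟨u', rfl, rfl⟩ := (T.mem_graph_iff).mp h'
  exact hT u u'

theorem LinearPMap.IsFormalAdjoint.eq_zero_of_mem_graph (hT : T.IsFormalAdjoint T) {u v : E}
    (huv : (u, v) ∈ T.graph) (hvu : (v, -u) ∈ T.graph) : u = 0 := by
  have h : inner 𝕜 (-u) u = inner 𝕜 v v := hT.inner_eq_of_mem_graph hvu huv
  rw [inner_neg_left, inner_self_eq_norm_sq_to_K, inner_self_eq_norm_sq_to_K] at h
  have h' : -‖u‖ ^ 2 = ‖v‖ ^ 2 := by exact_mod_cast h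
  have : ‖u‖ = 0 := by nlinarith [sq_nonneg ‖u‖, sq_nonneg ‖v‖]
  exact norm_eq_zero.mp this

/-- Graph form of `C x ∈ D(T²)` and `(1 + T²) C x = x`, with `y = T (C x)`. -/
def LinearPMap.IsOneAddSqRightInv (T : E →ₗ.[𝕜] E) (C : E →L[𝕜] E) : Prop :=
  ∀ x, ∃ y, (C x, y) ∈ T.graph ∧ (y, x - C x) ∈ T.graph

variable {C : E →L[𝕜] E}

theorem LinearPMap.IsFormalAdjoint.eq_apply_of_mem_graph (hT : T.IsFormalAdjoint T)
    (hC : T.IsOneAddSqRightInv C) {v w x : E} (hvw : (v, w) ∈ T.graph)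
    (hw : (w, x - v) ∈ T.graph) : v = C x := by
  obtain ⟨y, hCy, hy⟩ := hC x
  have h₁ : (v - C x, w - y) ∈ T.graph := by
    rw [← Prod.mk_sub_mk]; exact T.graph.sub_mem hvw hCy
  have h₂ : (w - y, -(v - C x)) ∈ T.graph := by
    rw [show -(v - C x) = (x - v) - (x - C x) by abel, ← Prod.mk_sub_mk]
    exact T.graph.sub_mem hw hy
  exact sub_eq_zero.mp (hT.eq_zero_of_mem_graph h₁ h₂)

theorem LinearPMap.IsFormalAdjoint.commute_of_isOneAddSqRightInv (hT : T.IsFormalAdjoint T)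
    (hC : T.IsOneAddSqRightInv C) {B : E →L[𝕜] E}
    (hB : ∀ x y, (x, y) ∈ T.graph → (B x, B y) ∈ T.graph) : Commute B C := by
  ext x
  obtain ⟨y, hCy, hy⟩ := hC x
  have hy' := hB _ _ hy
  rw [B.map_sub] at hy'
  exact hT.eq_apply_of_mem_graph hC (hB _ _ hCy) hy'

theorem LinearPMap.IsFormalAdjoint.apply_mem_graph (hT : T.IsFormalAdjoint T)
    (hC : T.IsOneAddSqRightInv C) {u t : E} (hut : (u, t) ∈ T.graph) :
    (C u, C t) ∈ T.graph := by
  obtain ⟨y, hCy, hy⟩ := hC u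
  have hyt : (u - C u, t - y) ∈ T.graph := by
    rw [← Prod.mk_sub_mk]; exact T.graph.sub_mem hut hCy
  rwa [← hT.eq_apply_of_mem_graph hC hy hyt]

end FormalAdjoint

theorem LinearPMap.commute_of_commute_of_mem_graph {𝕜 E : Type*} [RCLike 𝕜] [NormedAddCommGroup E]
    [InnerProductSpace 𝕜 E] {T : E →ₗ.[𝕜] E} {R S B : E →L[𝕜] E}
    (hS : ∀ x, (R x, S x) ∈ T.graph) (hB : ∀ x y, (x, y) ∈ T.graph → (B x, B y) ∈ T.graph)
    (hBR : Commute B R) : Commute B S := by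
  ext x
  have h := hB _ _ (hS x)
  rw [← mul_apply_eq_comp, hBR.eq, mul_apply_eq_comp] at h
  exact T.mem_graph_snd_inj h (hS (B x)) rfl

theorem IsSelfAdjoint.isFormalAdjoint {𝕜 E : Type*} [RCLike 𝕜] [NormedAddCommGroup E]
    [InnerProductSpace 𝕜 E] [CompleteSpace E] {T : E →ₗ.[𝕜] E} (hT : IsSelfAdjoint T) :
    T.IsFormalAdjoint T := by
  have h := LinearPMap.adjoint_isFormalAdjoint hT.dense_domain (T := T)
  rwa [LinearPMap.isSelfAdjoint_def.mp hT] at h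

/-- `R = (1 + T²)^{-1/2}` and `S = T R`. -/
structure IsBoundedTransformWitness {E : Type*} [NormedAddCommGroup E] [InnerProductSpace ℂ E]
    (T : E →ₗ.[ℂ] E) (R S : E →L[ℂ] E) : Prop where
  isFormalAdjoint : T.IsFormalAdjoint T
  nonneg : 0 ≤ R
  isOneAddSqRightInv : T.IsOneAddSqRightInv (R * R)
  mem_graph : ∀ x, (R x, S x) ∈ T.graph

theorem IsBoundedTransform.exists_witness {T : H →ₗ.[ℂ] H} {S : H →L[ℂ] H}
    (hT : IsSelfAdjoint T) (h : IsBoundedTransform T S) :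
    ∃ R, IsBoundedTransformWitness T R S := by
  obtain ⟨C, R, -, hR, rfl, hC, hS⟩ := h
  refine ⟨R, hT.isFormalAdjoint, (ContinuousLinearMap.nonneg_iff_isPositive R).mpr hR,
    fun x ↦ ?_, fun x ↦ ?_⟩
  · obtain ⟨h₁, h₂, hx⟩ := hC x
    refine ⟨_, T.mem_graph ⟨_, h₁⟩, ?_⟩
    rw [← eq_sub_of_add_eq' hx]
    exact T.mem_graph ⟨_, h₂⟩
  · obtain ⟨hx, hSx⟩ := hS x
    rw [hSx]
    exact T.mem_graph ⟨_, hx⟩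

namespace IsBoundedTransformWitness

variable {E : Type*} [NormedAddCommGroup E] [InnerProductSpace ℂ E]
  {T : E →ₗ.[ℂ] E} {R S B : E →L[ℂ] E}

theorem injective (w : IsBoundedTransformWitness T R S) : Function.Injective R := by
  refine (injective_iff_map_eq_zero R).mpr fun x hx ↦ ?_
  obtain ⟨y, hRRy, hy⟩ := w.isOneAddSqRightInv x
  have hRR : (R * R) x = 0 := by rw [mul_apply_eq_comp, hx, _root_.map_zero]
  rw [hRR] at hRRy hy
  rw [T.graph_fst_eq_zero_snd hRRy rfl, sub_zero] at hy
  exact T.graph_fst_eq_zero_snd hy rfl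

variable [CompleteSpace E]

theorem commute_of_mem_graph (w : IsBoundedTransformWitness T R S)
    (hB : ∀ x y, (x, y) ∈ T.graph → (B x, B y) ∈ T.graph) : Commute B S := by
  have hBR : Commute B (R * R) :=
    w.isFormalAdjoint.commute_of_isOneAddSqRightInv w.isOneAddSqRightInv hB
  exact T.commute_of_commute_of_mem_graph w.mem_graph hB (hBR.symm.of_mul_self_left w.nonneg).symm

theorem commute (w : IsBoundedTransformWitness T R S) : Commute R S := by
  have h := w.commute_of_mem_graph fun _ _ hxy ↦
    w.isFormalAdjoint.apply_mem_graph w.isOneAddSqRightInv hxy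
  exact h.of_mul_self_left w.nonneg

theorem mul_self_add_mul_self (w : IsBoundedTransformWitness T R S) :
    R * R + S * S = 1 := by
  ext x
  obtain ⟨y, hRRy, hy⟩ := w.isOneAddSqRightInv x
  have hyS : y = R (S x) := by
    rw [← mul_apply_eq_comp, w.commute.eq]
    exact T.mem_graph_snd_inj hRRy (w.mem_graph (R x)) rfl
  rw [hyS] at hy
  have hSS := T.mem_graph_snd_inj hy (w.mem_graph (S x)) rfl
  rw [add_apply, one_apply_eq_self, mul_apply_eq_comp S, ← hSS, add_sub_cancel]

theorem apply_eq_of_mem_graph (w : IsBoundedTransformWitness T R S) {u t : E}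
    (hut : (u, t) ∈ T.graph) : R t = S u := by
  have h := w.isFormalAdjoint.apply_mem_graph w.isOneAddSqRightInv hut
  refine w.injective (T.mem_graph_snd_inj h (w.mem_graph (R u)) rfl ▸ ?_)
  rw [← mul_apply_eq_comp, ← mul_apply_eq_comp, w.commute.eq]

theorem mem_graph_iff (w : IsBoundedTransformWitness T R S) {u t : E} :
    (u, t) ∈ T.graph ↔ ∃ φ, R φ = u ∧ S φ = t := by
  refine ⟨fun hut ↦ ?_, fun ⟨φ, hφu, hφt⟩ ↦ hφu ▸ hφt ▸ w.mem_graph φ⟩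
  have hu : R (R u + S t) = u := by
    rw [_root_.map_add, ← mul_apply_eq_comp, ← mul_apply_eq_comp,
      w.commute.eq, mul_apply_eq_comp S, w.apply_eq_of_mem_graph hut,
      ← mul_apply_eq_comp, ← add_apply,
      w.mul_self_add_mul_self, one_apply_eq_self]
  exact ⟨_, hu, T.mem_graph_snd_inj (w.mem_graph _) hut hu⟩

theorem commute_of_commute (w : IsBoundedTransformWitness T R S) (hBS : Commute B S) :
    Commute B R := by
  have hBRR : Commute B (R * R) := by
    rw [eq_sub_of_add_eq w.mul_self_add_mul_self]
    exact (Commute.one_right B).sub_right (hBS.mul_right hBS)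
  exact (hBRR.symm.of_mul_self_left w.nonneg).symm

theorem mem_graph_of_commute (w : IsBoundedTransformWitness T R S) (hBS : Commute B S)
    {x y : E} (hxy : (x, y) ∈ T.graph) : (B x, B y) ∈ T.graph := by
  obtain ⟨φ, rfl, rfl⟩ := w.mem_graph_iff.mp hxy
  rw [← mul_apply_eq_comp, ← mul_apply_eq_comp, (w.commute_of_commute hBS).eq, hBS.eq]
  exact w.mem_graph (B φ)

end IsBoundedTransformWitness

theorem commutesPMap_iff {E : Type*} [NormedAddCommGroup E] [InnerProductSpace ℂ E]
    {T : E →ₗ.[ℂ] E} {B : E →L[ℂ] E} :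
    CommutesPMap T B ↔ ∀ x y, (x, y) ∈ T.graph → (B x, B y) ∈ T.graph := by
  constructor
  · intro h x y hxy
    obtain ⟨u, rfl, rfl⟩ := T.mem_graph_iff.mp hxy
    obtain ⟨hBu, hTBu⟩ := h u
    rw [← hTBu]
    exact T.mem_graph ⟨_, hBu⟩
  · intro h u
    have hBu := h _ _ (T.mem_graph u)
    exact ⟨LinearPMap.mem_domain_of_mem_graph hBu, ((LinearPMap.image_iff _).mpr hBu).symm⟩

theorem affiliated_iff_boundedTransform_mem_general (T : H →ₗ.[ℂ] H) (S : H →L[ℂ] H)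
    (hsa : IsSelfAdjoint T)
    (hbt : IsBoundedTransform T S) (A : VonNeumannAlgebra H) :
    (∀ R ∈ Set.centralizer (A : Set (H →L[ℂ] H)), CommutesPMap T R) ↔ S ∈ A := by
  obtain ⟨R, w⟩ := hbt.exists_witness hsa
  simp only [commutesPMap_iff]
  constructor
  · intro haff
    rw [← SetLike.mem_coe, ← A.centralizer_centralizer]
    exact fun B hB ↦ (w.commute_of_mem_graph (haff B hB)).eq
  · exact fun hSA B hB _ _ ↦ w.mem_graph_of_commute (Set.mem_centralizer_iff.mp hB S hSA).symm

/-- `T` is affiliated with a von Neumann algebra `A` iff its bounded transform `S`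
belongs to `A`. -/
theorem affiliated_iff_boundedTransform_mem (T : H →ₗ.[ℂ] H) (S : H →L[ℂ] H)
    (hdense : Dense (T.domain : Set H)) (hsa : IsSelfAdjoint T)
    (hbt : IsBoundedTransform T S) (A : VonNeumannAlgebra H) :
    (∀ R ∈ Set.centralizer (A : Set (H →L[ℂ] H)), CommutesPMap T R) ↔ S ∈ A :=
  affiliated_iff_boundedTransform_mem_general T S hsa hbt A
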